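/- arXiv:0808.1936 — 7 statements merged into one kernel-verified Lean document; each statement's English description precedes it below -/
import Mathlib

section
/- For every n ≥ 1 and all x, ξ ∈ [0,1], both Δ_n(ξ)/Δ_n(x) and Δ_n(x)/Δ_n(ξ) are at most 2(1 + |x−ξ|/Δ_n(x)). -/
/-! Write `A = Δ_n(x)`, `B = Δ_n(ξ)`, `d = |x - ξ|`. Since `t(1-t)` is 1-Lipschitz on `[0,1]`
and `1/n ≤ Δ_n`, squaring gives `A² ≤ B² + d/n ≤ B(B + d)`, and symmetrically `B ≤ A + d`.
The first bound is `B/A ≤ 1 + d/A`; for the second, `A² ≤ B(B + d) ≤ B(A + 2d) ≤ 2B(A + d)`. -/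

noncomputable def Delta (n : ℕ) (x : ℝ) : ℝ :=
  max (Real.sqrt (x * (1 - x) / n)) (1 / n)

lemma Delta_nonneg (n : ℕ) (x : ℝ) : 0 ≤ Delta n x :=
  (Real.sqrt_nonneg _).trans (le_max_left _ _)

lemma one_div_le_Delta (n : ℕ) (x : ℝ) : 1 / (n : ℝ) ≤ Delta n x :=
  le_max_right _ _

lemma Delta_pos {n : ℕ} (hn : 1 ≤ n) (x : ℝ) : 0 < Delta n x :=
  lt_of_lt_of_le (by positivity) (one_div_le_Delta n x)

lemma mul_one_sub_le_add_abs_sub {a b : ℝ} (ha : a ∈ Set.Icc (0 : ℝ) 1)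
    (hb : b ∈ Set.Icc (0 : ℝ) 1) : a * (1 - a) ≤ b * (1 - b) + |a - b| := by
  obtain ⟨ha0, ha1⟩ := ha
  obtain ⟨hb0, hb1⟩ := hb
  have hbound : |1 - a - b| ≤ 1 := abs_le.2 ⟨by linarith, by linarith⟩
  calc a * (1 - a) = b * (1 - b) + (a - b) * (1 - a - b) := by ring
    _ ≤ b * (1 - b) + |a - b| * |1 - a - b| :=
        add_le_add_right ((le_abs_self _).trans_eq (abs_mul _ _)) _
    _ ≤ b * (1 - b) + |a - b| := by
        gcongr; exact mul_le_of_le_one_right (abs_nonneg _) hbound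

lemma sq_Delta_le_sq_add (n : ℕ) {a b : ℝ} (ha : a ∈ Set.Icc (0 : ℝ) 1)
    (hb : b ∈ Set.Icc (0 : ℝ) 1) : Delta n a ^ 2 ≤ Delta n b ^ 2 + |a - b| / n := by
  have hsqrt : b * (1 - b) / n ≤ Delta n b ^ 2 :=
    (Real.sqrt_le_left (Delta_nonneg n b)).1 (le_max_left _ _)
  rw [← Real.le_sqrt (Delta_nonneg n a) (by positivity)]
  apply max_le
  · apply Real.sqrt_le_sqrt
    calc a * (1 - a) / n ≤ (b * (1 - b) + |a - b|) / n := by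
          gcongr; exact mul_one_sub_le_add_abs_sub ha hb
      _ ≤ Delta n b ^ 2 + |a - b| / n := by rw [add_div]; gcongr
  · rw [Real.le_sqrt (by positivity) (by positivity)]
    have := pow_le_pow_left₀ (by positivity) (one_div_le_Delta n b) 2
    have : (0 : ℝ) ≤ |a - b| / n := by positivity
    linarith

lemma sq_Delta_le_mul (n : ℕ) {a b : ℝ} (ha : a ∈ Set.Icc (0 : ℝ) 1)
    (hb : b ∈ Set.Icc (0 : ℝ) 1) : Delta n a ^ 2 ≤ Delta n b * (Delta n b + |a - b|) :=
  calc Delta n a ^ 2 ≤ Delta n b ^ 2 + |a - b| * (1 / n) := by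
        simpa only [mul_one_div] using sq_Delta_le_sq_add n ha hb
    _ ≤ Delta n b ^ 2 + |a - b| * Delta n b := by gcongr; exact one_div_le_Delta n b
    _ = Delta n b * (Delta n b + |a - b|) := by ring

lemma Delta_le_add_abs_sub (n : ℕ) {a b : ℝ} (ha : a ∈ Set.Icc (0 : ℝ) 1)
    (hb : b ∈ Set.Icc (0 : ℝ) 1) : Delta n a ≤ Delta n b + |a - b| := by
  have hsum : 0 ≤ Delta n b + |a - b| := add_nonneg (Delta_nonneg n b) (abs_nonneg _)
  rw [← pow_le_pow_iff_left₀ (Delta_nonneg n a) hsum two_ne_zero]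
  calc Delta n a ^ 2 ≤ Delta n b * (Delta n b + |a - b|) := sq_Delta_le_mul n ha hb
    _ ≤ (Delta n b + |a - b|) * (Delta n b + |a - b|) :=
        mul_le_mul_of_nonneg_right (le_add_of_nonneg_right (abs_nonneg _)) hsum
    _ = (Delta n b + |a - b|) ^ 2 := by ring

theorem stmt_0 (n : ℕ) (hn : 1 ≤ n) (x ξ : ℝ)
    (hx : x ∈ Set.Icc (0:ℝ) 1) (hξ : ξ ∈ Set.Icc (0:ℝ) 1) :
    Delta n ξ / Delta n x ≤ 2 * (1 + |x - ξ| / Delta n x) ∧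
    Delta n x / Delta n ξ ≤ 2 * (1 + |x - ξ| / Delta n x) := by
  have hA := Delta_pos hn x
  have hB := Delta_pos hn ξ
  have hd := abs_nonneg (x - ξ)
  have hBA : Delta n ξ ≤ Delta n x + |x - ξ| := by
    simpa only [abs_sub_comm] using Delta_le_add_abs_sub n hξ hx
  have hAB : Delta n x ^ 2 ≤ Delta n ξ * (Delta n ξ + |x - ξ|) := sq_Delta_le_mul n hx hξ
  have hrhs : 2 * (1 + |x - ξ| / Delta n x) = 2 * (Delta n x + |x - ξ|) / Delta n x := by
    field_simp
  rw [hrhs, div_le_div_iff₀ hA hA, div_le_div_iff₀ hB hA]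
  constructor
  · nlinarith
  · calc Delta n x * Delta n x = Delta n x ^ 2 := by ring
      _ ≤ Delta n ξ * (Delta n ξ + |x - ξ|) := hAB
      _ ≤ Delta n ξ * (Delta n x + 2 * |x - ξ|) := mul_le_mul_of_nonneg_left (by linarith) hB.le
      _ ≤ 2 * (Delta n x + |x - ξ|) * Delta n ξ := by nlinarith
end

section
/- Let D ⊆ [0,1] and let (ψ_n) be a nonincreasing sequence of positive functions on D converging uniformly to 0. A function f admits a sequence of polynomials (g_n), where g_n has nonnegative Bernstein coefficients of degree n, satisfying g_m ⪯_n g_n for all m ≤ n (i.e. g_n − g_m has nonnegative degree-n Bernstein coefficients) and 0 ≤ f(x) − g_n(x) ≤ ψ_n(x) on D, if and only if f(x) = ∑_{n=0}^∞ F_n(x) on D where each F_n is a polynomial with nonnegative degree-n Bernstein coefficients and ∑_{n>N} F_n(x) ≤ ψ_N(x) for all x ∈ D and all N. -/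
/-- `q` has nonnegative degree-`n` Bernstein coefficients. -/
def BPos (n : ℕ) (q : ℝ → ℝ) : Prop :=
  ∃ a : ℕ → ℝ, (∀ k ≤ n, 0 ≤ a k) ∧
    ∀ x : ℝ, q x = ∑ k ∈ Finset.range (n + 1),
      a k * ((n.choose k : ℝ) * x ^ k * (1 - x) ^ (n - k))

/-!
The two sides correspond by telescoping: `F n = g n - g (n - 1)` and `g n = ∑_{k ≤ n} F k`, so that
`f - g N` is the tail `∑_{n > N} F n`, nonnegative on `D ⊆ [0, 1]`. The only Bernstein-specific
input is degree elevation: `q = x q + (1 - x) q` turns nonnegative degree-`n` coefficients into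
nonnegative degree-`(n + 1)` ones, so sums of the `F k` with `k ≤ n` have nonnegative
degree-`n` coefficients.
-/

open Finset Filter Topology

namespace BPos

theorem iff_exists_unscaled {n : ℕ} {q : ℝ → ℝ} :
    BPos n q ↔ ∃ b : ℕ → ℝ, (∀ k ≤ n, 0 ≤ b k) ∧
      ∀ x : ℝ, q x = ∑ k ∈ range (n + 1), b k * (x ^ k * (1 - x) ^ (n - k)) := by
  constructor
  · rintro ⟨a, ha, hq⟩
    refine ⟨fun k => a k * n.choose k, fun k hk => mul_nonneg (ha k hk) (Nat.cast_nonneg _),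
      fun x => (hq x).trans (sum_congr rfl fun k _ => by ring)⟩
  · rintro ⟨b, hb, hq⟩
    refine ⟨fun k => b k / n.choose k, fun k hk => div_nonneg (hb k hk) (Nat.cast_nonneg _),
      fun x => (hq x).trans (sum_congr rfl fun k hk => ?_)⟩
    have : (n.choose k : ℝ) ≠ 0 :=
      Nat.cast_ne_zero.2 (Nat.choose_pos (Nat.lt_succ_iff.1 (mem_range.1 hk))).ne'
    field_simp

theorem id_mul {n : ℕ} {q : ℝ → ℝ} (h : BPos n q) : BPos (n + 1) (fun x => x * q x) := by
  obtain ⟨b, hb, hq⟩ := iff_exists_unscaled.1 h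
  refine iff_exists_unscaled.2 ⟨fun k => if k = 0 then 0 else b (k - 1), fun k hk => ?_,
    fun x => ?_⟩
  · dsimp only
    split_ifs
    · exact le_rfl
    · exact hb _ (by omega)
  · rw [sum_range_succ', hq x, mul_sum]
    simp only [Nat.succ_ne_zero, if_false, if_true, Nat.add_sub_cancel, zero_mul, add_zero,
      Nat.reduceSubDiff]
    exact sum_congr rfl fun k _ => by ring

theorem one_sub_mul {n : ℕ} {q : ℝ → ℝ} (h : BPos n q) :
    BPos (n + 1) (fun x => (1 - x) * q x) := by
  obtain ⟨b, hb, hq⟩ := iff_exists_unscaled.1 h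
  refine iff_exists_unscaled.2 ⟨fun k => if k ≤ n then b k else 0, fun k _ => ?_, fun x => ?_⟩
  · dsimp only
    split_ifs with hk
    · exact hb k hk
    · exact le_rfl
  · rw [sum_range_succ, hq x, mul_sum]
    simp only [(Nat.lt_succ_self n).not_ge, if_false, zero_mul, add_zero]
    refine sum_congr rfl fun k hk => ?_
    have hk : k ≤ n := Nat.lt_succ_iff.1 (mem_range.1 hk)
    rw [if_pos hk, Nat.sub_add_comm hk, pow_succ]
    ring

theorem congr {n : ℕ} {p q : ℝ → ℝ} (h : BPos n p) (hpq : ∀ x, p x = q x) : BPos n q := by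
  obtain ⟨a, ha, hp⟩ := h
  exact ⟨a, ha, fun x => hpq x ▸ hp x⟩

theorem zero (n : ℕ) : BPos n (fun _ => 0) :=
  ⟨fun _ => 0, fun _ _ => le_rfl, fun x => by simp⟩

theorem add {n : ℕ} {p q : ℝ → ℝ} (hp : BPos n p) (hq : BPos n q) :
    BPos n (fun x => p x + q x) := by
  obtain ⟨a, ha, hpa⟩ := hp
  obtain ⟨b, hb, hqb⟩ := hq
  refine ⟨a + b, fun k hk => add_nonneg (ha k hk) (hb k hk), fun x => ?_⟩
  simp only [hpa x, hqb x, ← sum_add_distrib, Pi.add_apply, add_mul]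

theorem degree_succ {n : ℕ} {q : ℝ → ℝ} (h : BPos n q) : BPos (n + 1) q :=
  (h.id_mul.add h.one_sub_mul).congr fun x => by ring

theorem degree_mono {m n : ℕ} (hmn : m ≤ n) {q : ℝ → ℝ} (h : BPos m q) : BPos n q := by
  induction n, hmn using Nat.le_induction with
  | base => exact h
  | succ n _ ih => exact ih.degree_succ

theorem finset_sum {n : ℕ} {s : Finset ℕ} {F : ℕ → ℝ → ℝ} (hs : ∀ k ∈ s, k ≤ n)
    (hF : ∀ k ∈ s, BPos k (F k)) : BPos n (fun x => ∑ k ∈ s, F k x) := by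
  induction s using Finset.induction_on with
  | empty => exact (zero n).congr fun x => by simp
  | insert k s hk ih =>
    refine (((hF k (mem_insert_self k s)).degree_mono (hs k (mem_insert_self k s))).add
      (ih (fun j hj => hs j (mem_insert_of_mem hj)) fun j hj => hF j (mem_insert_of_mem hj))).congr
      fun x => by rw [sum_insert hk]

theorem nonneg {n : ℕ} {q : ℝ → ℝ} (h : BPos n q) {x : ℝ} (hx : x ∈ Set.Icc (0 : ℝ) 1) :
    0 ≤ q x := by
  obtain ⟨a, ha, hq⟩ := h
  obtain ⟨h0, h1⟩ := hx
  have h1 : 0 ≤ 1 - x := sub_nonneg.2 h1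
  rw [hq]
  exact sum_nonneg fun k hk =>
    mul_nonneg (ha k (Nat.lt_succ_iff.1 (mem_range.1 hk))) (by positivity)

end BPos

theorem HasSum.tsum_tail_eq_sub {u : ℕ → ℝ} {s : ℝ} (h : HasSum u s) (N : ℕ) :
    ∑' n, u (N + n) = s - ∑ k ∈ range N, u k := by
  simp_rw [add_comm N]
  exact ((hasSum_nat_add_iff' N).2 h).tsum_eq

theorem hasSum_of_tendsto_partialSum_of_nonneg {u : ℕ → ℝ} {s : ℝ} (hu : ∀ n, 0 ≤ u n)
    (h : Tendsto (fun N => ∑ k ∈ range (N + 1), u k) atTop (𝓝 s)) : HasSum u s :=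
  (hasSum_iff_tendsto_nat_of_nonneg hu s).2 ((tendsto_add_atTop_iff_nat 1).1 h)

def consecutiveDiff (g : ℕ → ℝ → ℝ) : ℕ → ℝ → ℝ
  | 0 => g 0
  | n + 1 => fun x => g (n + 1) x - g n x

theorem sum_range_consecutiveDiff (g : ℕ → ℝ → ℝ) (N : ℕ) (x : ℝ) :
    ∑ k ∈ range (N + 1), consecutiveDiff g k x = g N x := by
  induction N with
  | zero => simp [consecutiveDiff]
  | succ N ih => rw [sum_range_succ, ih, consecutiveDiff]; ring

theorem exists_bernstein_series_of_approx {D : Set ℝ} (hD : D ⊆ Set.Icc (0 : ℝ) 1)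
    {ψ : ℕ → ℝ → ℝ} (hψ : ∀ x ∈ D, Tendsto (fun n => ψ n x) atTop (𝓝 0)) {f : ℝ → ℝ}
    {g : ℕ → ℝ → ℝ} (hg : ∀ n, BPos n (g n))
    (hg_succ : ∀ n, BPos (n + 1) (fun x => g (n + 1) x - g n x))
    (hfg : ∀ n, ∀ x ∈ D, 0 ≤ f x - g n x ∧ f x - g n x ≤ ψ n x) :
    ∃ F : ℕ → ℝ → ℝ,
      (∀ n, BPos n (F n)) ∧
      (∀ x ∈ D, HasSum (fun n => F n x) (f x)) ∧
      (∀ N : ℕ, ∀ x ∈ D, ∑' n : ℕ, F (N + 1 + n) x ≤ ψ N x) := by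
  have hF : ∀ n, BPos n (consecutiveDiff g n)
    | 0 => hg 0
    | n + 1 => hg_succ n
  have hsum : ∀ x ∈ D, HasSum (fun n => consecutiveDiff g n x) (f x) := by
    intro x hx
    refine hasSum_of_tendsto_partialSum_of_nonneg (fun n => (hF n).nonneg (hD hx)) ?_
    have hgap : Tendsto (fun N => f x - g N x) atTop (𝓝 0) :=
      squeeze_zero (fun N => (hfg N x hx).1) (fun N => (hfg N x hx).2) (hψ x hx)
    simpa [sum_range_consecutiveDiff] using (tendsto_const_nhds (x := f x)).sub hgap
  refine ⟨consecutiveDiff g, hF, hsum, fun N x hx => ?_⟩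
  rw [(hsum x hx).tsum_tail_eq_sub, sum_range_consecutiveDiff]
  exact (hfg N x hx).2

theorem exists_approx_of_bernstein_series {D : Set ℝ} (hD : D ⊆ Set.Icc (0 : ℝ) 1)
    {ψ : ℕ → ℝ → ℝ} {f : ℝ → ℝ} {F : ℕ → ℝ → ℝ} (hF : ∀ n, BPos n (F n))
    (hsum : ∀ x ∈ D, HasSum (fun n => F n x) (f x))
    (htail : ∀ N : ℕ, ∀ x ∈ D, ∑' n : ℕ, F (N + 1 + n) x ≤ ψ N x) :
    ∃ g : ℕ → ℝ → ℝ,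
      (∀ n, BPos n (g n)) ∧
      (∀ m n, m ≤ n → BPos n (fun x => g n x - g m x)) ∧
      (∀ n, ∀ x ∈ D, 0 ≤ f x - g n x ∧ f x - g n x ≤ ψ n x) := by
  refine ⟨fun n x => ∑ k ∈ range (n + 1), F k x,
    fun n => BPos.finset_sum (fun k hk => Nat.lt_succ_iff.1 (mem_range.1 hk)) fun k _ => hF k,
    fun m n hmn => ?_, fun n x hx => ?_⟩
  · refine (BPos.finset_sum (s := Ico (m + 1) (n + 1))
      (fun k hk => Nat.lt_succ_iff.1 (mem_Ico.1 hk).2) fun k _ => hF k).congr fun x => ?_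
    exact sum_Ico_eq_sub _ (by omega)
  · rw [← (hsum x hx).tsum_tail_eq_sub]
    exact ⟨tsum_nonneg fun k => (hF _).nonneg (hD hx), htail n x hx⟩

theorem stmt_9_general (D : Set ℝ) (hD : D ⊆ Set.Icc (0:ℝ) 1)
    (ψ : ℕ → ℝ → ℝ)
    (hψunif : TendstoUniformlyOn (fun n x => ψ n x) 0 Filter.atTop D)
    (f : ℝ → ℝ) :
    (∃ g : ℕ → ℝ → ℝ,
      (∀ n, BPos n (g n)) ∧
      (∀ m n, m ≤ n → BPos n (fun x => g n x - g m x)) ∧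
      (∀ n, ∀ x ∈ D, 0 ≤ f x - g n x ∧ f x - g n x ≤ ψ n x)) ↔
    (∃ F : ℕ → ℝ → ℝ,
      (∀ n, BPos n (F n)) ∧
      (∀ x ∈ D, HasSum (fun n => F n x) (f x)) ∧
      (∀ N : ℕ, ∀ x ∈ D, ∑' n : ℕ, F (N + 1 + n) x ≤ ψ N x)) := by
  constructor
  · rintro ⟨g, hg, hg_sub, hfg⟩
    exact exists_bernstein_series_of_approx hD (fun x hx => hψunif.tendsto_at hx) hg
      (fun n => hg_sub n (n + 1) n.le_succ) hfg
  · rintro ⟨F, hF, hsum, htail⟩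
    exact exists_approx_of_bernstein_series hD hF hsum htail

theorem stmt_9 (D : Set ℝ) (hD : D ⊆ Set.Icc (0:ℝ) 1)
    (ψ : ℕ → ℝ → ℝ)
    (hψpos : ∀ n, ∀ x ∈ D, 0 < ψ n x)
    (hψmono : ∀ n, ∀ x ∈ D, ψ (n + 1) x ≤ ψ n x)
    (hψunif : TendstoUniformlyOn (fun n x => ψ n x) 0 Filter.atTop D)
    (f : ℝ → ℝ) :
    (∃ g : ℕ → ℝ → ℝ,
      (∀ n, BPos n (g n)) ∧
      (∀ m n, m ≤ n → BPos n (fun x => g n x - g m x)) ∧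
      (∀ n, ∀ x ∈ D, 0 ≤ f x - g n x ∧ f x - g n x ≤ ψ n x)) ↔
    (∃ F : ℕ → ℝ → ℝ,
      (∀ n, BPos n (F n)) ∧
      (∀ x ∈ D, HasSum (fun n => F n x) (f x)) ∧
      (∀ N : ℕ, ∀ x ∈ D, ∑' n : ℕ, F (N + 1 + n) x ≤ ψ N x)) :=
  stmt_9_general D hD ψ hψunif f
end

section
/- If [c,d] ⊆ [a,b] with c < d, then B_n^+[a,b] ⊆ B_n^+[c,d]; that is, every polynomial with nonnegative Bernstein coefficients over [a,b] also has nonnegative Bernstein coefficients of the same degree over any subinterval. -/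
def BPosOn (a b : ℝ) (n : ℕ) (q : ℝ → ℝ) : Prop :=
  ∃ c : ℕ → ℝ, (∀ k, 0 ≤ c k) ∧
    ∀ x : ℝ, q x = ∑ k ∈ Finset.range (n + 1), c k * (x - a) ^ k * (b - x) ^ (n - k)

/-!
Each Bernstein basis polynomial `(x - a)^k (b - x)^(n - k)` of `[a, b]` is a product of `k` copies
of `x - a` and `n - k` copies of `b - x`. Over a subinterval `[c, d]` both factors have nonnegative
degree-one Bernstein coefficients, since `x - a = ((c - a)(d - x) + (d - a)(x - c)) / (d - c)` and
`b - x = ((b - c)(d - x) + (b - d)(x - c)) / (d - c)`. The cone `B_n^+[c, d]` is closed under sums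
and nonnegative scaling, and `B_m^+ · B_m'^+ ⊆ B_(m+m')^+`, so every basis polynomial of `[a, b]`,
and hence every element of `B_n^+[a, b]`, lies in `B_n^+[c, d]`.
-/

open Finset

namespace BPosOn

variable {a b : ℝ} {m m' n : ℕ} {f g : ℝ → ℝ}

theorem congr (hf : BPosOn a b n f) (hfg : ∀ x, f x = g x) : BPosOn a b n g := by
  obtain ⟨cf, hcf, hf⟩ := hf
  exact ⟨cf, hcf, fun x => (hfg x).symm.trans (hf x)⟩

theorem zero (a b : ℝ) (n : ℕ) : BPosOn a b n 0 :=
  ⟨0, fun _ => le_rfl, by simp⟩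

theorem add (hf : BPosOn a b n f) (hg : BPosOn a b n g) : BPosOn a b n (f + g) := by
  obtain ⟨cf, hcf, hf⟩ := hf
  obtain ⟨cg, hcg, hg⟩ := hg
  refine ⟨cf + cg, fun k => add_nonneg (hcf k) (hcg k), fun x => ?_⟩
  simp only [Pi.add_apply, hf x, hg x, add_mul, sum_add_distrib]

theorem sum {ι : Type*} {s : Finset ι} {F : ι → ℝ → ℝ} (hF : ∀ i ∈ s, BPosOn a b n (F i)) :
    BPosOn a b n (fun x => ∑ i ∈ s, F i x) := by
  simp only [← Finset.sum_apply]
  exact Finset.sum_induction F (BPosOn a b n) (fun _ _ => add) (zero a b n) hF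

theorem const_mul {t : ℝ} (hf : BPosOn a b n f) (ht : 0 ≤ t) :
    BPosOn a b n (fun x => t * f x) := by
  obtain ⟨cf, hcf, hf⟩ := hf
  refine ⟨t • cf, fun k => mul_nonneg ht (hcf k), fun x => ?_⟩
  simp only [hf x, mul_sum, Pi.smul_apply, smul_eq_mul, mul_assoc]

theorem basis (a b : ℝ) {k : ℕ} (hk : k ≤ n) :
    BPosOn a b n (fun x => (x - a) ^ k * (b - x) ^ (n - k)) := by
  refine ⟨fun i => if i = k then 1 else 0, fun _ => ite_nonneg zero_le_one le_rfl, fun x => ?_⟩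
  simp [ite_mul, sum_ite_eq', Nat.lt_succ_iff.mpr hk]

theorem mul (hf : BPosOn a b m f) (hg : BPosOn a b m' g) :
    BPosOn a b (m + m') (fun x => f x * g x) := by
  obtain ⟨cf, hcf, hf⟩ := hf
  obtain ⟨cg, hcg, hg⟩ := hg
  have hprod : ∀ x, ∑ i ∈ range (m + 1), ∑ j ∈ range (m' + 1),
      cf i * cg j * ((x - a) ^ (i + j) * (b - x) ^ (m + m' - (i + j))) = f x * g x := by
    intro x
    rw [hf, hg, sum_mul_sum]
    refine sum_congr rfl fun i hi => sum_congr rfl fun j hj => ?_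
    simp only [mem_range] at hi hj
    rw [show m + m' - (i + j) = (m - i) + (m' - j) by omega, pow_add, pow_add]
    ring
  refine (sum fun i hi => sum fun j hj => ?_).congr hprod
  simp only [mem_range] at hi hj
  exact (basis a b (by omega)).const_mul (mul_nonneg (hcf i) (hcg j))

theorem pow (hf : BPosOn a b 1 f) (k : ℕ) : BPosOn a b k (fun x => f x ^ k) := by
  induction k with
  | zero => exact (basis a b le_rfl).congr fun x => by simp
  | succ k ih => exact (ih.mul hf).congr fun x => (pow_succ _ _).symm

end BPosOn

theorem bPosOn_sub_left {a c d : ℝ} (hac : a ≤ c) (hcd : c < d) :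
    BPosOn c d 1 (fun x => x - a) := by
  have hdc : 0 < d - c := sub_pos.mpr hcd
  refine (((BPosOn.basis c d (k := 0) zero_le_one).const_mul
      (div_nonneg (sub_nonneg.mpr hac) hdc.le)).add
    ((BPosOn.basis c d (k := 1) le_rfl).const_mul
      (div_nonneg (sub_nonneg.mpr (hac.trans hcd.le)) hdc.le))).congr fun x => ?_
  simp only [Pi.add_apply]
  field_simp
  ring

theorem bPosOn_sub_right {b c d : ℝ} (hcd : c < d) (hdb : d ≤ b) :
    BPosOn c d 1 (fun x => b - x) := by
  have hdc : 0 < d - c := sub_pos.mpr hcd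
  refine (((BPosOn.basis c d (k := 0) zero_le_one).const_mul
      (div_nonneg (sub_nonneg.mpr (hcd.le.trans hdb)) hdc.le)).add
    ((BPosOn.basis c d (k := 1) le_rfl).const_mul
      (div_nonneg (sub_nonneg.mpr hdb) hdc.le))).congr fun x => ?_
  simp only [Pi.add_apply]
  field_simp
  ring

theorem bPosOn_basis_of_subinterval {a b c d : ℝ} (hac : a ≤ c) (hcd : c < d) (hdb : d ≤ b)
    {n k : ℕ} (hk : k ≤ n) : BPosOn c d n (fun x => (x - a) ^ k * (b - x) ^ (n - k)) := by
  have h := ((bPosOn_sub_left hac hcd).pow k).mul ((bPosOn_sub_right hcd hdb).pow (n - k))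
  rwa [Nat.add_sub_cancel' hk] at h

theorem stmt_12 (a b c d : ℝ) (hac : a ≤ c) (hcd : c < d) (hdb : d ≤ b)
    (n : ℕ) (q : ℝ → ℝ) (hq : BPosOn a b n q) : BPosOn c d n q := by
  obtain ⟨coef, hcoef, hq⟩ := hq
  refine (BPosOn.sum fun k hk => (bPosOn_basis_of_subinterval hac hcd hdb
    (Nat.lt_succ_iff.mp (mem_range.mp hk))).const_mul (hcoef k)).congr fun x => ?_
  simp only [hq x, mul_assoc]
end

section
/- Let p be a real polynomial of degree n with p(0) > 0 and no complex roots in the closed unit disc {|z| ≤ 1}. Then p ∈ B_n^+[−1,1], i.e. p(x) = ∑_{k=0}^n c_k (x+1)^k (1−x)^{n−k} with all c_k ≥ 0. -/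
/-!
The cone `B_n^+[-1,1]` is spanned by `(x+1)^k (1-x)^(n-k)`, and the product of two such basis
elements is again one, so `B_m^+ · B_n^+ ⊆ B_{m+n}^+`. Over `ℝ` the polynomial `p` factors into
linear factors `r² - r x` with `|r| > 1` and quadratic factors `x² - 2ax + s` with `a² ≤ s`,
`s > 1` (from a pair of conjugate roots `z`, `z̄`, `s = |z|²`), each normalised to be positive
at `0`; peeling them off one at a time keeps the value at `0` positive and the roots outside the
closed disc. Both kinds of factor lie in the cone:
`b - a x = (b+a)/2 · (1-x) + (b-a)/2 · (1+x)` and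
`x² - 2ax + s = (1+2a+s)/4 · (1-x)² + (s-1)/2 · (1-x)(1+x) + (1-2a+s)/4 · (1+x)²`,
with nonnegative coefficients since `(1 ± a)² ≥ 0`.
-/

open Polynomial

noncomputable def bernsteinCone (n : ℕ) : PointedCone ℝ ℝ[X] :=
  Submodule.span _ (Set.range fun k : Fin (n + 1) => (X + 1) ^ (k : ℕ) * (1 - X) ^ (n - k))

namespace bernsteinCone

theorem basis_mem {n k : ℕ} (hk : k ≤ n) : (X + 1) ^ k * (1 - X) ^ (n - k) ∈ bernsteinCone n :=
  Submodule.subset_span ⟨⟨k, Nat.lt_succ_of_le hk⟩, rfl⟩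

theorem C_mul_mem {n : ℕ} {c : ℝ} (hc : 0 ≤ c) {p : ℝ[X]} (hp : p ∈ bernsteinCone n) :
    C c * p ∈ bernsteinCone n := by
  rw [← smul_eq_C_mul]
  exact Submodule.smul_mem _ ⟨c, hc⟩ hp

theorem mul_mem {m n : ℕ} {p q : ℝ[X]} (hp : p ∈ bernsteinCone m) (hq : q ∈ bernsteinCone n) :
    p * q ∈ bernsteinCone (m + n) := by
  induction hp, hq using Submodule.span_induction₂ with
  | mem_mem _ _ hx hy =>
    obtain ⟨i, rfl⟩ := hx
    obtain ⟨j, rfl⟩ := hy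
    convert basis_mem (n := m + n) (k := i + j) (by omega) using 1
    rw [show m + n - (i + j) = (m - i) + (n - j) by omega]
    ring
  | zero_left => simp
  | zero_right => simp
  | add_left _ _ _ _ _ _ hx hy => rw [add_mul]; exact add_mem hx hy
  | add_right _ _ _ _ _ _ hx hy => rw [mul_add]; exact add_mem hx hy
  | smul_left c _ _ _ _ h => rw [smul_mul_assoc]; exact Submodule.smul_mem _ c h
  | smul_right c _ _ _ _ h => rw [mul_smul_comm]; exact Submodule.smul_mem _ c h

theorem C_mem_zero {c : ℝ} (hc : 0 ≤ c) : C c ∈ bernsteinCone 0 := by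
  simpa using C_mul_mem hc (basis_mem (n := 0) le_rfl)

theorem C_sub_C_mul_X_mem {a b : ℝ} (h : |a| ≤ b) : C b - C a * X ∈ bernsteinCone 1 := by
  obtain ⟨h₁, h₂⟩ := abs_le.mp h
  have key : C b - C a * X = C ((b + a) / 2) * ((X + 1) ^ 0 * (1 - X) ^ (1 - 0))
      + C ((b - a) / 2) * ((X + 1) ^ 1 * (1 - X) ^ (1 - 1)) :=
    Polynomial.funext fun x => by simp; ring
  rw [key]
  exact add_mem (C_mul_mem (by linarith) (basis_mem (by omega)))
    (C_mul_mem (by linarith) (basis_mem le_rfl))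

theorem X_sq_sub_C_mul_X_add_C_mem {a s : ℝ} (ha : a ^ 2 ≤ s) (hs : 1 ≤ s) :
    X ^ 2 - C (2 * a) * X + C s ∈ bernsteinCone 2 := by
  have key : X ^ 2 - C (2 * a) * X + C s
      = C ((1 + 2 * a + s) / 4) * ((X + 1) ^ 0 * (1 - X) ^ (2 - 0))
      + C ((s - 1) / 2) * ((X + 1) ^ 1 * (1 - X) ^ (2 - 1))
      + C ((1 - 2 * a + s) / 4) * ((X + 1) ^ 2 * (1 - X) ^ (2 - 2)) :=
    Polynomial.funext fun x => by simp; ring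
  rw [key]
  refine add_mem (add_mem (C_mul_mem ?_ (basis_mem (by omega)))
    (C_mul_mem (by linarith) (basis_mem (by omega)))) (C_mul_mem ?_ (basis_mem le_rfl))
  · nlinarith [sq_nonneg (1 + a)]
  · nlinarith [sq_nonneg (1 - a)]

theorem exists_eval_eq_sum {n : ℕ} {p : ℝ[X]} (hp : p ∈ bernsteinCone n) :
    ∃ c : ℕ → ℝ, (∀ k, 0 ≤ c k) ∧
      ∀ x : ℝ, p.eval x = ∑ k ∈ Finset.range (n + 1), c k * (x + 1) ^ k * (1 - x) ^ (n - k) := by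
  obtain ⟨c, rfl⟩ := (Submodule.mem_span_range_iff_exists_fun _).mp hp
  refine ⟨fun k => if h : k < n + 1 then c ⟨k, h⟩ else 0, fun k => ?_, fun x => ?_⟩
  · dsimp only
    split_ifs
    exacts [(c _).2, le_rfl]
  · rw [← Fin.sum_univ_eq_sum_range, eval_finsetSum]
    refine Finset.sum_congr rfl fun i _ => ?_
    rw [← Nonneg.coe_smul, eval_smul, smul_eq_mul]
    simp [Fin.is_le, mul_assoc]

end bernsteinCone

def NoRootsInClosedUnitDisc (p : ℝ[X]) : Prop :=
  ∀ z : ℂ, ‖z‖ ≤ 1 → aeval z p ≠ 0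

theorem NoRootsInClosedUnitDisc.of_dvd {p q : ℝ[X]} (hp : NoRootsInClosedUnitDisc p)
    (h : q ∣ p) : NoRootsInClosedUnitDisc q := by
  obtain ⟨r, rfl⟩ := h
  exact fun z hz hq => hp z hz (by simp [hq])

theorem isRoot_re_of_aeval_eq_zero {p : ℝ[X]} {z : ℂ} (hz : aeval z p = 0) (him : z.im = 0) :
    p.IsRoot z.re := by
  have hzr : z = algebraMap ℝ ℂ z.re := Complex.ext rfl (by simp [him])
  rw [hzr, aeval_algebraMap_apply_eq_algebraMap_eval] at hz
  simpa using hz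

theorem exists_dvd_mem_bernsteinCone {p : ℝ[X]} (hp : NoRootsInClosedUnitDisc p)
    (hdeg : p.natDegree ≠ 0) :
    ∃ d : ℝ[X], d ∣ p ∧ 0 < d.natDegree ∧ 0 < d.eval 0 ∧ d ∈ bernsteinCone d.natDegree := by
  obtain ⟨z, hz⟩ := IsAlgClosed.exists_aeval_eq_zero ℂ p
    (natDegree_pos_iff_degree_pos.mp (Nat.pos_of_ne_zero hdeg)).ne'
  have hz1 : 1 < ‖z‖ := lt_of_not_ge fun h => hp z h hz
  by_cases him : z.im = 0
  · set r := z.re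
    have hr1 : 1 < |r| := by rwa [Complex.abs_re_eq_norm.mpr him]
    have hr0 : r ≠ 0 := by rintro h; norm_num [h] at hr1
    have hdeg1 : (C (r ^ 2) - C r * X).natDegree = 1 := by compute_degree!
    refine ⟨C (r ^ 2) - C r * X, ?_, by omega, by simpa using pow_pos (abs_pos.mpr hr0) 2, ?_⟩
    · rw [show C (r ^ 2) - C r * X = C (-r) * (X - C r) by rw [map_neg, map_pow]; ring,
        (isUnit_C.mpr (IsUnit.mk0 _ (neg_ne_zero.mpr hr0))).mul_left_dvd]
      exact dvd_iff_isRoot.mpr (isRoot_re_of_aeval_eq_zero hz him)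
    · rw [hdeg1]
      exact bernsteinCone.C_sub_C_mul_X_mem (by nlinarith [abs_mul_abs_self r, sq_abs r])
  · have hdeg2 : (X ^ 2 - C (2 * z.re) * X + C (‖z‖ ^ 2)).natDegree = 2 := by compute_degree!
    refine ⟨_, quadratic_dvd_of_aeval_eq_zero_im_ne_zero p hz him, by omega,
      by simpa using pow_pos (hz1.trans' one_pos) 2, ?_⟩
    rw [hdeg2]
    exact bernsteinCone.X_sq_sub_C_mul_X_add_C_mem
      (sq_le_sq.mpr (by simpa using Complex.abs_re_le_norm z)) (by nlinarith)

theorem mem_bernsteinCone_natDegree {p : ℝ[X]} (h0 : 0 < p.eval 0)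
    (hp : NoRootsInClosedUnitDisc p) : p ∈ bernsteinCone p.natDegree := by
  induction hn : p.natDegree using Nat.strong_induction_on generalizing p with
  | _ n ih =>
  subst hn
  by_cases hdeg : p.natDegree = 0
  · rw [hdeg, eq_C_of_natDegree_eq_zero hdeg]
    exact bernsteinCone.C_mem_zero (by simpa [coeff_zero_eq_eval_zero] using h0.le)
  obtain ⟨d, ⟨q, rfl⟩, hd, hd0, hdq⟩ := exists_dvd_mem_bernsteinCone hp hdeg
  have hq : q ≠ 0 := by rintro rfl; simp at h0
  have hdeg_mul : (d * q).natDegree = d.natDegree + q.natDegree :=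
    natDegree_mul (by rintro rfl; simp at hd) hq
  rw [hdeg_mul]
  refine bernsteinCone.mul_mem hdq (ih _ (by omega) ?_ (hp.of_dvd (dvd_mul_left q d)) rfl)
  rw [eval_mul] at h0
  exact pos_of_mul_pos_right h0 hd0.le

theorem stmt_13 (n : ℕ) (p : Polynomial ℝ) (hdeg : p.natDegree = n)
    (h0 : 0 < p.eval 0)
    (hroots : ∀ z : ℂ, ‖z‖ ≤ 1 → Polynomial.aeval z p ≠ 0) :
    ∃ c : ℕ → ℝ, (∀ k, 0 ≤ c k) ∧
      ∀ x : ℝ, p.eval x = ∑ k ∈ Finset.range (n + 1), c k * (x + 1) ^ k * (1 - x) ^ (n - k) :=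
  hdeg ▸ bernsteinCone.exists_eval_eq_sum (mem_bernsteinCone_natDegree h0 hroots)
end

section
/- Let P_{2n}(z) := ∑_{k=0}^n (−1)^k z^{2k}/k! be the degree-2n Taylor polynomial of e^{−z²} at 0. Then P_{2n} has no roots in the closed disc {|z| ≤ √n/e}; moreover |e^{−z²} − P_{2n}(z)| < e^{−n} for all |z| ≤ √n/e. -/
/-!
Put `w = -z²`, so `‖w‖ ≤ n / e²` and `P n z` is the partial sum `∑_{m ≤ n} w^m / m!` of `exp w`.
Since `m! ≥ (m / e)^m`, every term of the tail satisfies `‖w‖^m / m! ≤ (e ‖w‖ / m)^m ≤ e^{-m}`,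
and, as `‖w‖ ≤ (n + 2) / 2`, the tail is at most twice its first term, so `‖exp w - P n z‖ ≤ 2 e^{-(n+1)} < e^{-n}`.
On the other hand `‖exp w‖ = e^{-Re z²} ≥ e^{-‖z‖²} > e^{-n}`, so `P n z` cannot vanish.
-/

/-- Degree-`2n` Taylor polynomial of `exp (-z^2)` at `0`. -/
noncomputable def P (n : ℕ) (z : ℂ) : ℂ :=
  ∑ k ∈ Finset.range (n + 1), (-1 : ℂ) ^ k * z ^ (2 * k) / (Nat.factorial k : ℂ)

open Real Finset Nat

lemma P_eq_sum_range (n : ℕ) (z : ℂ) :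
    P n z = ∑ m ∈ range (n + 1), (-z ^ 2) ^ m / (m ! : ℂ) := by
  refine sum_congr rfl fun m _ => ?_
  rw [neg_pow, pow_mul]
  ring

lemma pow_div_factorial_le_exp_neg {r : ℝ} {m : ℕ} (hr : 0 ≤ r) (hm : exp 1 ^ 2 * r ≤ m) :
    r ^ m / m ! ≤ exp (-m) := by
  rcases Nat.eq_zero_or_pos m with rfl | hm0
  · simp
  have hm0' : (0 : ℝ) < m := by exact_mod_cast hm0
  calc r ^ m / m ! = (r / m) ^ m * ((m : ℝ) ^ m / m !) := by rw [div_pow]; field_simp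
    _ ≤ (r / m) ^ m * exp m := by gcongr; exact pow_div_factorial_le_exp _ hm0'.le m
    _ = (exp 1 * r / m) ^ m := by rw [← exp_one_pow, ← mul_pow]; ring
    _ ≤ exp (-1) ^ m := by
        gcongr
        rw [exp_neg, div_le_iff₀ hm0', ← div_eq_inv_mul, le_div_iff₀ (exp_pos 1)]
        linarith
    _ = exp (-m) := by rw [← exp_nat_mul]; ring_nf

lemma norm_exp_neg_sq_sub_P_le {n : ℕ} {z : ℂ} (hz : exp 1 ^ 2 * ‖z‖ ^ 2 ≤ n) :
    ‖Complex.exp (-z ^ 2) - P n z‖ ≤ 2 * exp (-(n + 1)) := by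
  have hnorm : ‖-z ^ 2‖ = ‖z‖ ^ 2 := by rw [norm_neg, norm_pow]
  have he : 4 < exp 1 ^ 2 := by nlinarith [exp_one_gt_two]
  have hsmall : ‖-z ^ 2‖ / (n + 1).succ ≤ 1 / 2 := by
    rw [hnorm, div_le_iff₀ (by positivity)]
    push_cast
    nlinarith [sq_nonneg ‖z‖]
  calc ‖Complex.exp (-z ^ 2) - P n z‖ ≤ (‖z‖ ^ 2) ^ (n + 1) / (n + 1)! * 2 := by
        rw [P_eq_sum_range, ← hnorm]; exact Complex.exp_bound' hsmall
    _ ≤ exp (-(n + 1 : ℕ)) * 2 := by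
        gcongr
        refine pow_div_factorial_le_exp_neg (sq_nonneg _) ?_
        push_cast
        linarith
    _ = 2 * exp (-(n + 1)) := by push_cast; ring

lemma two_mul_exp_neg_succ_lt (x : ℝ) : 2 * exp (-(x + 1)) < exp (-x) := by
  rw [neg_add, exp_add, exp_neg 1, ← mul_assoc, mul_comm 2, mul_assoc,
    mul_lt_iff_lt_one_right (exp_pos _), ← div_eq_mul_inv, div_lt_one (exp_pos 1)]
  exact exp_one_gt_two

lemma exp_neg_norm_sq_le_norm_exp_neg_sq (z : ℂ) : exp (-‖z‖ ^ 2) ≤ ‖Complex.exp (-z ^ 2)‖ := by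
  rw [Complex.norm_exp, exp_le_exp, Complex.neg_re, neg_le_neg_iff, ← norm_pow]
  exact Complex.re_le_norm _

theorem stmt_15 (n : ℕ) (hn : 1 ≤ n) (z : ℂ)
    (hz : ‖z‖ ≤ Real.sqrt n / Real.exp 1) :
    P n z ≠ 0 ∧ ‖Complex.exp (-z ^ 2) - P n z‖ < Real.exp (-(n : ℝ)) := by
  have hr : exp 1 ^ 2 * ‖z‖ ^ 2 ≤ n := by
    rw [le_div_iff₀ (exp_pos 1)] at hz
    calc exp 1 ^ 2 * ‖z‖ ^ 2 = (‖z‖ * exp 1) ^ 2 := by ring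
      _ ≤ √n ^ 2 := by gcongr
      _ = n := sq_sqrt n.cast_nonneg
  have htail := (norm_exp_neg_sq_sub_P_le hr).trans_lt (two_mul_exp_neg_succ_lt n)
  refine ⟨fun hP => ?_, htail⟩
  have hlt : ‖z‖ ^ 2 < n := by
    have h1 : (1 : ℝ) ≤ n := by exact_mod_cast hn
    have he : 1 < exp 1 ^ 2 := by nlinarith [exp_one_gt_two]
    nlinarith [sq_nonneg ‖z‖]
  have hlower : exp (-n) < ‖Complex.exp (-z ^ 2)‖ :=
    (exp_lt_exp.2 (neg_lt_neg hlt)).trans_le (exp_neg_norm_sq_le_norm_exp_neg_sq z)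
  rw [hP, sub_zero] at htail
  exact htail.not_gt hlower
end

section
/- Let Υ(x) := (x(1−x))^{α/2} for α ∈ (0,2). There is a constant c_α such that for all x ∈ (0,1) and 0 ≤ t ≤ min{x, 1−x}, (Υ(x+t) + Υ(x−t))/2 ≥ Υ(x)·(1 − c_α t²/min{x,1−x}²). -/
/-!
Write `Υ(x ± t)^{2/α} = (x ± t)(1 - x ∓ t)`. Their product factors as `(x² - t²)((1 - x)² - t²)`,
and each factor is at least `(1 - t²/m²)` times `x²`, resp. `(1 - x)²`, where `m = min x (1 - x)`.
By AM-GM the average of `Υ(x + t)` and `Υ(x - t)` is therefore at least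
`(x(1 - x)(1 - t²/m²))^{α/2}`, and since `α/2 ≤ 1` and `0 ≤ 1 - t²/m² ≤ 1` this is at least
`Υ(x)(1 - t²/m²)`. So `c_α = 1` works for every `α ∈ (0, 2)`.
-/

open Real

lemma rpow_le_add_rpow_div_two_of_sq_le_mul {a b c r : ℝ} (ha : 0 ≤ a) (hb : 0 ≤ b) (hc : 0 ≤ c)
    (hr : 0 ≤ r) (hcab : c ^ 2 ≤ a * b) : c ^ r ≤ (a ^ r + b ^ r) / 2 := by
  have hsq : (c ^ r) ^ 2 ≤ a ^ r * b ^ r := by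
    rw [rpow_pow_comm hc, ← mul_rpow ha hb]
    exact rpow_le_rpow (by positivity) hcab hr
  nlinarith [rpow_nonneg ha r, rpow_nonneg hb r, rpow_nonneg hc r, sq_nonneg (a ^ r - b ^ r)]

lemma one_sub_sq_div_sq_nonneg {m t : ℝ} (hm : 0 < m) (ht : t ^ 2 ≤ m ^ 2) :
    0 ≤ 1 - t ^ 2 / m ^ 2 :=
  sub_nonneg.2 ((div_le_one (by positivity)).2 ht)

lemma sq_mul_one_sub_le_sq_sub_sq {x m t : ℝ} (hm : 0 < m) (hmx : m ≤ x) :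
    x ^ 2 * (1 - t ^ 2 / m ^ 2) ≤ x ^ 2 - t ^ 2 := by
  have : t ^ 2 ≤ x ^ 2 * (t ^ 2 / m ^ 2) :=
    calc t ^ 2 = m ^ 2 * (t ^ 2 / m ^ 2) := by field_simp
      _ ≤ x ^ 2 * (t ^ 2 / m ^ 2) := by gcongr
  linarith

lemma sq_mul_mul_one_sub_le_mul_sq_sub_sq {x y m t : ℝ} (hm : 0 < m) (hmx : m ≤ x) (hmy : m ≤ y)
    (ht : t ^ 2 ≤ m ^ 2) : (x * y * (1 - t ^ 2 / m ^ 2)) ^ 2 ≤ (x ^ 2 - t ^ 2) * (y ^ 2 - t ^ 2) := by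
  have hT := one_sub_sq_div_sq_nonneg hm ht
  calc (x * y * (1 - t ^ 2 / m ^ 2)) ^ 2
      = (x ^ 2 * (1 - t ^ 2 / m ^ 2)) * (y ^ 2 * (1 - t ^ 2 / m ^ 2)) := by ring
    _ ≤ (x ^ 2 - t ^ 2) * (y ^ 2 - t ^ 2) :=
      mul_le_mul (sq_mul_one_sub_le_sq_sub_sq hm hmx) (sq_mul_one_sub_le_sq_sub_sq hm hmy)
        (by positivity) (by nlinarith [sq_nonneg x])

theorem stmt_17 (α : ℝ) (hα : α ∈ Set.Ioo (0:ℝ) 2) :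
    ∃ c : ℝ, ∀ x ∈ Set.Ioo (0:ℝ) 1, ∀ t : ℝ, 0 ≤ t → t ≤ min x (1 - x) →
      (((x + t) * (1 - (x + t))) ^ (α / 2) + ((x - t) * (1 - (x - t))) ^ (α / 2)) / 2
        ≥ (x * (1 - x)) ^ (α / 2) * (1 - c * t ^ 2 / (min x (1 - x)) ^ 2) := by
  obtain ⟨hα0, hα2⟩ := hα
  refine ⟨1, fun x ⟨hx0, hx1⟩ t ht0 htm => ?_⟩
  set m := min x (1 - x)
  have hm : 0 < m := lt_min hx0 (by linarith)
  have hmx : m ≤ x := min_le_left _ _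
  have hmx' : m ≤ 1 - x := min_le_right _ _
  have htm2 : t ^ 2 ≤ m ^ 2 := pow_le_pow_left₀ ht0 htm 2
  have hT := one_sub_sq_div_sq_nonneg hm htm2
  have hT1 : 1 - t ^ 2 / m ^ 2 ≤ 1 := by linarith [div_nonneg (sq_nonneg t) (sq_nonneg m)]
  have hprod : (x * (1 - x) * (1 - t ^ 2 / m ^ 2)) ^ 2
      ≤ ((x + t) * (1 - (x + t))) * ((x - t) * (1 - (x - t))) :=
    (sq_mul_mul_one_sub_le_mul_sq_sub_sq hm hmx hmx' htm2).trans_eq (by ring)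
  calc (x * (1 - x)) ^ (α / 2) * (1 - 1 * t ^ 2 / m ^ 2)
      ≤ (x * (1 - x)) ^ (α / 2) * (1 - t ^ 2 / m ^ 2) ^ (α / 2) := by
        rw [one_mul]
        gcongr
        exact self_le_rpow_of_le_one hT hT1 (by linarith)
    _ = (x * (1 - x) * (1 - t ^ 2 / m ^ 2)) ^ (α / 2) := (mul_rpow (by nlinarith) hT).symm
    _ ≤ _ := rpow_le_add_rpow_div_two_of_sq_le_mul (by nlinarith) (by nlinarith) (by positivity)
        (by linarith) hprod
end

section
/- Fix h ∈ (0,1), m ≥ 1, and define f_{h,m}(x) := ∑_{ℓ∈ℤ} e^{−π ℓ²/h²} e^{−2πi ℓ x √m / h} (a real-valued absolutely convergent sum). Then: (a) |f_{h,m}(x) − 1| ≤ 4 e^{−π/h²} for all x; and (b) f_{h,m}(0) − f_{h,m}(h/(2√m)) ≥ 4 e^{−π/h²}. -/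
/-!
With `q = e^{-π/h²}`, the `ℓ`-th term of the series has absolute value at most
`q^{ℓ²} ≤ q^{|ℓ|}`, so the terms with `ℓ ≠ 0` add up to at most `2q/(1-q) ≤ 4q` once `q ≤ 1/2`,
which holds for `h ≤ 1`. At `x = h/(2√m)` the cosines become `cos(ℓπ)`, so `f(0) - f(x)` is the
sum of the nonnegative terms `e^{-πℓ²/h²}(1 - cos ℓπ)`, of which `ℓ = ±1` alone contribute `4q`.
-/

/-- The real-valued function `f_{h,m}`, written via its absolutely convergent
Fourier series: the terms for `ℓ` and `-ℓ` combine to cosines. -/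
noncomputable def fhm (h : ℝ) (m : ℕ) (x : ℝ) : ℝ :=
  ∑' ℓ : ℤ, Real.exp (-(Real.pi * (ℓ : ℝ) ^ 2 / h ^ 2)) *
    Real.cos (2 * Real.pi * (ℓ : ℝ) * x * Real.sqrt m / h)

open Real

theorem hasSum_pow_natAbs {q : ℝ} (hq0 : 0 ≤ q) (hq1 : q < 1) :
    HasSum (fun ℓ : ℤ => q ^ ℓ.natAbs) ((1 + q) / (1 - q)) := by
  have hpos : HasSum (fun n : ℕ => q ^ (n + 1)) (q / (1 - q)) := by
    simpa only [pow_succ', div_eq_mul_inv] using (hasSum_geometric_of_lt_one hq0 hq1).mul_left q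
  convert HasSum.of_add_one_of_neg_add_one (f := fun ℓ : ℤ => q ^ ℓ.natAbs)
    (by simpa only [← Nat.cast_succ, Int.natAbs_natCast] using hpos)
    (by simpa only [← Nat.cast_succ, Int.natAbs_neg, Int.natAbs_natCast] using hpos) using 1
  field_simp [(sub_pos.mpr hq1).ne']
  ring

theorem abs_tsum_sub_apply_zero_le {q : ℝ} (hq0 : 0 ≤ q) (hq : q ≤ 1 / 2) {a : ℤ → ℝ}
    (ha : ∀ ℓ, |a ℓ| ≤ q ^ ℓ.natAbs) : |∑' ℓ, a ℓ - a 0| ≤ 4 * q := by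
  have hq1 : q < 1 := by linarith
  have hb := hasSum_pow_natAbs hq0 hq1
  have hsa : Summable a := .of_norm_bounded hb.summable ha
  have key := (hsa.hasSum.update 0 0).norm_le_of_bounded (hb.update 0 0) fun ℓ => by
    rcases eq_or_ne ℓ 0 with rfl | hℓ
    · simp
    · simpa [Function.update_of_ne hℓ] using ha ℓ
  calc |∑' ℓ, a ℓ - a 0| = ‖0 - a 0 + ∑' ℓ, a ℓ‖ := by rw [Real.norm_eq_abs]; ring_nf
    _ ≤ 0 - 1 + (1 + q) / (1 - q) := by simpa using key
    _ = 2 * q / (1 - q) := by field_simp [(sub_pos.mpr hq1).ne']; ring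
    _ ≤ 4 * q := by rw [div_le_iff₀ (by linarith)]; nlinarith

theorem exp_neg_pi_div_sq_lt_one {h : ℝ} (hh : h ≠ 0) : exp (-(π / h ^ 2)) < 1 :=
  exp_lt_one_iff.mpr (neg_lt_zero.mpr (by positivity))

theorem exp_neg_pi_div_sq_le_half {h : ℝ} (h0 : 0 < h) (h1 : h ≤ 1) :
    exp (-(π / h ^ 2)) ≤ 1 / 2 := by
  have : 1 ≤ π / h ^ 2 := by
    rw [le_div_iff₀ (by positivity)]
    nlinarith [pi_gt_three]
  exact (exp_le_exp.mpr (neg_le_neg this)).trans exp_neg_one_lt_half.le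

theorem exp_neg_pi_mul_sq_div_sq (h : ℝ) (ℓ : ℤ) :
    exp (-(π * (ℓ : ℝ) ^ 2 / h ^ 2)) = exp (-(π / h ^ 2)) ^ (ℓ.natAbs ^ 2) := by
  rw [← exp_nat_mul, Nat.cast_pow, Nat.cast_natAbs, Int.cast_abs, sq_abs]
  ring_nf

theorem abs_exp_neg_pi_mul_sq_div_sq_mul_cos_le (h : ℝ) (ℓ : ℤ) (θ : ℝ) :
    |exp (-(π * (ℓ : ℝ) ^ 2 / h ^ 2)) * cos θ| ≤ exp (-(π / h ^ 2)) ^ ℓ.natAbs := by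
  have hq1 : exp (-(π / h ^ 2)) ≤ 1 := exp_le_one_iff.mpr (neg_nonpos.mpr (by positivity))
  rw [abs_mul, abs_of_pos (exp_pos _), exp_neg_pi_mul_sq_div_sq]
  calc _ ≤ exp (-(π / h ^ 2)) ^ (ℓ.natAbs ^ 2) * 1 := by gcongr; exact abs_cos_le_one θ
    _ ≤ _ := by
      rw [mul_one]
      exact pow_le_pow_of_le_one (exp_pos _).le hq1 (Nat.le_self_pow two_ne_zero _)

theorem summable_fhm_term {h : ℝ} (hh : h ≠ 0) (m : ℕ) (x : ℝ) :
    Summable fun ℓ : ℤ => exp (-(π * (ℓ : ℝ) ^ 2 / h ^ 2)) *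
      cos (2 * π * (ℓ : ℝ) * x * √m / h) :=
  .of_norm_bounded (hasSum_pow_natAbs (exp_pos _).le (exp_neg_pi_div_sq_lt_one hh)).summable
    fun ℓ => abs_exp_neg_pi_mul_sq_div_sq_mul_cos_le h ℓ _

theorem abs_fhm_sub_one_le {h : ℝ} (h0 : 0 < h) (h1 : h ≤ 1) (m : ℕ) (x : ℝ) :
    |fhm h m x - 1| ≤ 4 * exp (-(π / h ^ 2)) := by
  simpa [fhm] using abs_tsum_sub_apply_zero_le (exp_pos _).le (exp_neg_pi_div_sq_le_half h0 h1)
    fun ℓ => abs_exp_neg_pi_mul_sq_div_sq_mul_cos_le h ℓ (2 * π * (ℓ : ℝ) * x * √m / h)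

theorem four_mul_le_fhm_zero_sub_fhm_half_period {h : ℝ} (hh : h ≠ 0) {m : ℕ} (hm : m ≠ 0) :
    4 * exp (-(π / h ^ 2)) ≤ fhm h m 0 - fhm h m (h / (2 * √m)) := by
  set g : ℤ → ℝ := fun ℓ => exp (-(π * (ℓ : ℝ) ^ 2 / h ^ 2))
  have hterm : (fun ℓ : ℤ => g ℓ * cos (2 * π * (ℓ : ℝ) * 0 * √m / h) -
      g ℓ * cos (2 * π * (ℓ : ℝ) * (h / (2 * √m)) * √m / h)) =
      fun ℓ : ℤ => g ℓ * (1 - cos (ℓ * π)) := by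
    ext ℓ
    have hsqrt : √(m : ℝ) ≠ 0 := by positivity
    rw [show 2 * π * (ℓ : ℝ) * (h / (2 * √m)) * √m / h = ℓ * π by field_simp]
    simp only [mul_zero, zero_mul, zero_div, cos_zero]
    ring
  have hsummable : Summable fun ℓ : ℤ => g ℓ * (1 - cos (ℓ * π)) :=
    hterm ▸ (summable_fhm_term hh m 0).sub (summable_fhm_term hh m _)
  have hdiff : fhm h m 0 - fhm h m (h / (2 * √m)) = ∑' ℓ : ℤ, g ℓ * (1 - cos (ℓ * π)) := by
    rw [fhm, fhm, ← (summable_fhm_term hh m 0).tsum_sub (summable_fhm_term hh m _), ← hterm]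
  rw [hdiff]
  calc 4 * exp (-(π / h ^ 2)) = ∑ ℓ ∈ {1, -1}, g ℓ * (1 - cos (ℓ * π)) := by
        simp [g]; ring
    _ ≤ _ := hsummable.sum_le_tsum _ fun ℓ _ =>
        mul_nonneg (exp_pos _).le (sub_nonneg.mpr (cos_le_one _))

theorem stmt_19 (h : ℝ) (hh : h ∈ Set.Ioo (0:ℝ) 1) (m : ℕ) (hm : 1 ≤ m) :
    (∀ x : ℝ, |fhm h m x - 1| ≤ 4 * Real.exp (-(Real.pi / h ^ 2))) ∧
    fhm h m 0 - fhm h m (h / (2 * Real.sqrt m)) ≥ 4 * Real.exp (-(Real.pi / h ^ 2)) :=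
  ⟨abs_fhm_sub_one_le hh.1 hh.2.le m,
    four_mul_le_fhm_zero_sub_fhm_half_period hh.1.ne' (Nat.one_le_iff_ne_zero.mp hm)⟩
end
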